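/- arXiv:math/0401066 — 2 statements merged into one kernel-verified Lean document; each statement's English description precedes it below -/
import Mathlib

section
/- With the setup of Delsarte's monomial map: Σ_{x ∈ (K^×)^s} ψ(F(x)) = (q−1)^{s−r} Σ_{χ ∈ G̃} Σ_{y ∈ (K^×)^r} χ(y) ψ(a·y), where F(x) = Σ_i a_i ∏_j x_j^{m_{ji}} and G̃ is the group of characters of (K^×)^r trivial on the image G of the monomial map φ. -/
/-!
Grouping the `x` by `y = φ x`, every `y ∈ G` is hit `|ker φ|` times, so the left side is
`|ker φ| ∑_{y ∈ G} ψ(a·y)`. By duality for the finite abelian group `(K^×)^r / G`, the sum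
`∑_{χ ∈ G̃} χ y` is `[(K^×)^r : G]` for `y ∈ G` and `0` otherwise, so the right-hand double sum
is `[(K^×)^r : G] ∑_{y ∈ G} ψ(a·y)`. Finally `|ker φ| = (q-1)^s / |G| = (q-1)^(s-r) [(K^×)^r : G]`.
-/

open Classical Finset

noncomputable instance (G : Type*) [CommGroup G] [Finite G] : Fintype (G →* ℂˣ) :=
  Fintype.ofInjective
    (fun χ : G →* ℂˣ => AddChar.toMonoidHomEquiv.symm
      ((Units.coeHom ℂ).comp (χ.comp (MulEquiv.multiplicativeAdditive G).toMonoidHom)))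
    (by
      intro χ₁ χ₂ h
      ext g
      have := congrArg (fun ψ => AddChar.toMonoidHomEquiv ψ
        (Multiplicative.ofAdd (Additive.ofMul g))) h
      simpa using this)

/-- Delsarte's monomial ("Veronese") map `phi(x) i = ∏ j, x j ^ m j i`. -/
def monomialMap (K : Type*) [Field K] (s r : ℕ) (m : Fin s → Fin r → ℕ) :
    (Fin s → Kˣ) →* (Fin r → Kˣ) where
  toFun x := fun i => ∏ j, x j ^ m j i
  map_one' := by funext i; simp
  map_mul' x y := by funext i; simp [mul_pow, Finset.prod_mul_distrib]

namespace MonoidHom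

section Fibres

variable {G H : Type*} [Group G] [Group H]

theorem sum_comp_eq_card_ker_smul [Fintype G] [Fintype H] {M : Type*} [AddCommMonoid M]
    (φ : G →* H) [DecidablePred (· ∈ φ.range)] (f : H → M) :
    ∑ x, f (φ x) = Nat.card φ.ker • ∑ y with y ∈ φ.range, f y := by
  have himage : univ.image φ = univ.filter (· ∈ φ.range) := by
    ext y
    simp [eq_comm]
  have hfiber_one : #{x | φ x = 1} = Nat.card φ.ker := by
    rw [← Fintype.card_subtype, Nat.card_eq_fintype_card]
    exact Fintype.card_congr (Equiv.refl _)
  rw [sum_comp, himage, smul_sum]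
  refine sum_congr rfl fun y hy => ?_
  rw [← hfiber_one, card_fiber_eq_of_mem_range φ (by simpa using hy) ⟨1, map_one φ⟩]

theorem natCast_card_ker {𝕜 : Type*} [Field 𝕜] [CharZero 𝕜] [Finite H] (φ : G →* H) :
    (Nat.card φ.ker : 𝕜) = Nat.card G / Nat.card H * Nat.card (H ⧸ φ.range) := by
  have hG : Nat.card G = Nat.card φ.range * Nat.card φ.ker := by
    rw [φ.ker.card_eq_card_quotient_mul_card_subgroup,
      Nat.card_congr (QuotientGroup.quotientKerEquivRange φ).toEquiv]
  have hH := φ.range.card_eq_card_quotient_mul_card_subgroup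
  have hrange : (Nat.card φ.range : 𝕜) ≠ 0 := by simp [Nat.card_pos.ne']
  have hquot : (Nat.card (H ⧸ φ.range) : 𝕜) ≠ 0 := by simp [Nat.card_pos.ne']
  rw [hG, hH]
  push_cast
  field_simp

end Fibres

section Annihilator

variable {H : Type*} [CommGroup H]

theorem sum_annihilator_apply [Finite H] (N : Subgroup H) (y : H)
    [DecidablePred fun χ : H →* ℂˣ => ∀ z ∈ N, χ z = 1] :
    ∑ χ ∈ univ.filter (fun χ : H →* ℂˣ => ∀ z ∈ N, χ z = 1), (χ y : ℂ)
      = if y ∈ N then (Nat.card (H ⧸ N) : ℂ) else 0 := by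
  set Φ := (domRestrictHom N ℂˣ).ker
  have hmem (χ : H →* ℂˣ) :
      χ ∈ univ.filter (fun χ : H →* ℂˣ => ∀ z ∈ N, χ z = 1) ↔ χ ∈ Φ := by
    simp [Φ, mem_ker, domRestrict_eq_one_iff]
  let evaluation : Φ →* ℂ := (Units.coeHom ℂ).comp ((eval y).comp Φ.subtype)
  have heval : evaluation = 1 ↔ y ∈ N := by
    rw [← CommGroup.forall_monoidHom_apply_eq_one_iff ℂ N y]
    simp [DFunLike.ext_iff, evaluation, Φ]
  rw [sum_subtype _ hmem (fun χ => (χ y : ℂ))]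
  change ∑ χ, evaluation χ = _
  rw [sum_hom_units evaluation, ← Nat.card_eq_fintype_card, CommGroup.card_domRestrictHom_ker]
  simp only [heval, Nat.cast_ite, Nat.cast_zero]

theorem sum_annihilator_sum_apply_mul [Fintype H] (N : Subgroup H) [DecidablePred (· ∈ N)]
    (g : H → ℂ) [DecidablePred fun χ : H →* ℂˣ => ∀ z ∈ N, χ z = 1] :
    ∑ χ ∈ univ.filter (fun χ : H →* ℂˣ => ∀ z ∈ N, χ z = 1), ∑ y, (χ y : ℂ) * g y
      = Nat.card (H ⧸ N) * ∑ y with y ∈ N, g y := by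
  rw [sum_comm]
  simp_rw [← sum_mul, sum_annihilator_apply, ite_mul, zero_mul]
  rw [← sum_filter, mul_sum]

end Annihilator

end MonoidHom

theorem Sbar_eq_char_sum_general (K : Type*) [Field K] [Fintype K]
    (s r : ℕ) (ψ : AddChar K ℂ)
    (a : Fin r → K) (m : Fin s → Fin r → ℕ) :
    ∑ x : Fin s → Kˣ, ψ (∑ i, a i * ∏ j, (x j : K) ^ m j i)
      = ((Fintype.card K : ℂ) - 1) ^ ((s : ℤ) - (r : ℤ)) *
          ∑ χ ∈ Finset.univ.filter
              (fun χ : (Fin r → Kˣ) →* ℂˣ =>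
                ∀ y ∈ (monomialMap K s r m).range, χ y = 1),
            ∑ y : Fin r → Kˣ, (χ y : ℂ) * ψ (∑ i, a i * (y i : K)) := by
  set φ := monomialMap K s r m
  have hq : (Fintype.card K : ℂ) - 1 = Nat.card Kˣ := by
    rw [Nat.card_eq_fintype_card, Fintype.card_units, Nat.cast_sub Fintype.card_pos, Nat.cast_one]
  have hcard : (Nat.card φ.ker : ℂ)
      = ((Fintype.card K : ℂ) - 1) ^ ((s : ℤ) - r) * Nat.card ((Fin r → Kˣ) ⧸ φ.range) := by
    rw [MonoidHom.natCast_card_ker, hq, zpow_sub₀ (by simp), Nat.card_pi, Nat.card_pi]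
    simp
  have hF (x : Fin s → Kˣ) : ∑ i, a i * ∏ j, (x j : K) ^ m j i = ∑ i, a i * (φ x i : K) := by
    simp [φ, monomialMap]
  simp_rw [hF, MonoidHom.sum_annihilator_sum_apply_mul]
  rw [MonoidHom.sum_comp_eq_card_ker_smul φ (fun y => ψ (∑ i, a i * (y i : K))), nsmul_eq_mul,
    hcard, mul_assoc]

/-- Delsarte §3, eq. (4): `∑_{x ∈ (K^×)^s} ψ(F(x))
= (q-1)^{s-r} ∑_{χ ∈ G̃} ∑_{y ∈ (K^×)^r} χ(y) ψ(a·y)`. -/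
theorem Sbar_eq_char_sum (K : Type*) [Field K] [Fintype K]
    (s r : ℕ) (ψ : AddChar K ℂ) (hψ : ψ ≠ 1)
    (a : Fin r → K) (ha : ∀ i, a i ≠ 0) (m : Fin s → Fin r → ℕ) :
    ∑ x : Fin s → Kˣ, ψ (∑ i, a i * ∏ j, (x j : K) ^ m j i)
      = ((Fintype.card K : ℂ) - 1) ^ ((s : ℤ) - (r : ℤ)) *
          ∑ χ ∈ Finset.univ.filter
              (fun χ : (Fin r → Kˣ) →* ℂˣ =>
                ∀ y ∈ (monomialMap K s r m).range, χ y = 1),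
            ∑ y : Fin r → Kˣ, (χ y : ℂ) * ψ (∑ i, a i * (y i : K)) :=
  Sbar_eq_char_sum_general K s r ψ a m
end

section
/- Delsarte's theorem: Let K = F_q, let F(x) = Σ_{i=1}^r a_i x_1^{m_{1i}}⋯x_s^{m_{si}} with a_i ∈ K^× and q−1 dividing none of the m_{ji}. Let N̄ be the number of solutions of F = 0 with all coordinates in K^×. Then N̄ = (1/q)[(q−1)^s + (q−1)^{s−r+1} Σ_{χ ∈ G̃*} χ̄(a) 𝒢₀(χ)], where G̃* is the set of characters χ = (χ₁,…,χ_r) of (K^×)^r trivial on the image of the monomial map and with χ₁⋯χ_r trivial on K^×, χ̄(a) = ∏ χ_i(a_i)⁻¹, and 𝒢₀(χ) = ∏ g_{ψ₀}(χ_i) for a fixed nontrivial additive character ψ₀. -/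
open Classical Finset

noncomputable instance (K : Type*) [Field K] [Fintype K] : Fintype (MulChar K ℂ) :=
  Fintype.ofEquiv _ MulChar.equivToUnitHom.symm

noncomputable instance quotFintypeChar {G : Type*} [CommGroup G] [Finite G] (N : Subgroup G) :
    Fintype ((G ⧸ N) →* ℂˣ) := by infer_instance

lemma addChar_map_sum {K : Type*} [AddCommMonoid K] (ψ : AddChar K ℂ) {ι : Type*}
    (s : Finset ι) (f : ι → K) : ψ (∑ i ∈ s, f i) = ∏ i ∈ s, ψ (f i) := by
  classical
  induction s using Finset.cons_induction with
  | empty => simp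
  | cons i s hi ih => rw [Finset.sum_cons, Finset.prod_cons, AddChar.map_add_eq_mul, ih]

lemma sum_comp_monoidHom {A H : Type*} [Group A] [Group H] [Fintype A] [Fintype H]
    [DecidableEq H] (f : A →* H) (g : H → ℂ) :
    ∑ p : A, g (f p)
      = (Nat.card f.ker : ℂ) * ∑ u ∈ Finset.univ.filter (fun u => u ∈ f.range), g u := by
  rw [Finset.mul_sum]
  rw [← Finset.sum_fiberwise_of_maps_to (g := fun p => f p)
    (t := Finset.univ.filter (fun u => u ∈ f.range))
    (fun p _ => Finset.mem_filter.mpr ⟨Finset.mem_univ _, ⟨p, rfl⟩⟩)]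
  refine Finset.sum_congr rfl fun u hu => ?_
  obtain ⟨-, hu⟩ := Finset.mem_filter.mp hu
  have hcard : (Finset.univ.filter (fun p => f p = u)).card = Nat.card f.ker := by
    have h1 : (Finset.univ.filter (fun p => f p = u)).card
        = (Finset.univ.filter (fun p => f p = 1)).card := by
      refine MonoidHom.card_fiber_eq_of_mem_range f ?_ ?_
      · obtain ⟨p, hp⟩ := hu; exact ⟨p, hp⟩
      · exact ⟨1, map_one f⟩
    rw [h1]
    calc (Finset.univ.filter (fun p => f p = 1)).card
        = Fintype.card {p : A // f p = 1} := (Fintype.card_subtype _).symm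
      _ = Nat.card {p : A // f p = 1} := Nat.card_eq_fintype_card.symm
      _ = Nat.card f.ker := Nat.card_congr (Equiv.subtypeEquivRight fun p => (f.mem_ker).symm)
  calc ∑ p ∈ Finset.univ.filter (fun p => f p = u), g (f p)
      = ∑ p ∈ Finset.univ.filter (fun p => f p = u), g u :=
        Finset.sum_congr rfl fun p hp => by rw [(Finset.mem_filter.mp hp).2]
    _ = (Nat.card f.ker : ℂ) * g u := by
        rw [Finset.sum_const, nsmul_eq_mul, hcard]

lemma neZero_exponent_cast (Q : Type*) [CommGroup Q] [Finite Q] :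
    NeZero ((Monoid.exponent Q : ℂ)) :=
  ⟨Nat.cast_ne_zero.mpr Monoid.exponent_ne_zero_of_finite⟩

lemma sum_monoidHom_apply_eq_zero {Q : Type*} [CommGroup Q] [Finite Q] {y : Q} (hy : y ≠ 1) :
    ∑ χ : Q →* ℂˣ, ((χ y : ℂˣ) : ℂ) = 0 := by
  have := neZero_exponent_cast Q
  obtain ⟨φ, hφ⟩ := CommGroup.exists_apply_ne_one_of_hasEnoughRootsOfUnity Q ℂ hy
  have key : ∑ χ : Q →* ℂˣ, ((χ y : ℂˣ) : ℂ)
      = ∑ χ : Q →* ℂˣ, (((φ * χ) y : ℂˣ) : ℂ) :=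
    (Fintype.sum_bijective (fun χ => φ * χ) (Group.mulLeft_bijective φ) _ _ fun χ => rfl).symm
  simp only [MonoidHom.mul_apply, Units.val_mul, ← Finset.mul_sum] at key
  refine eq_zero_of_mul_eq_self_left (a := ∑ χ : Q →* ℂˣ, ((χ y : ℂˣ) : ℂ))
    (b := ((φ y : ℂˣ) : ℂ)) ?_ key.symm
  intro h
  exact hφ (Units.ext h)

lemma card_monoidHom_eq (Q : Type*) [CommGroup Q] [Finite Q] :
    Nat.card (Q →* ℂˣ) = Nat.card Q := by
  have := neZero_exponent_cast Q
  exact Nat.card_congr (CommGroup.monoidHom_mulEquiv_of_hasEnoughRootsOfUnity Q ℂ).some.toEquiv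

section DelsarteAux
open Classical Finset

variable {K : Type*} [Field K] [Fintype K] {s r : ℕ}

/-- coercion of the monomial map -/
lemma monomialMap_coe (m : Fin s → Fin r → ℕ) (x : Fin s → Kˣ) (i : Fin r) :
    ((monomialMap K s r m x i : Kˣ) : K) = ∏ j, (x j : K) ^ m j i := by
  simp [monomialMap]

/-- The extended monomial map incorporating the diagonal torus. -/
def delsartePhi (m : Fin s → Fin r → ℕ) : (Kˣ × (Fin s → Kˣ)) →* (Fin r → Kˣ) where
  toFun p := fun i => p.1 * monomialMap K s r m p.2 i
  map_one' := by funext i; simp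
  map_mul' p q := by
    funext i
    show (p.1 * q.1) * monomialMap K s r m (p.2 * q.2) i = _
    rw [map_mul]
    exact mul_mul_mul_comm _ _ _ _

/-- The character of `(Kˣ)^r` attached to a tuple of multiplicative characters. -/
noncomputable def delsarteChar (χs : Fin r → MulChar K ℂ) : (Fin r → Kˣ) →* ℂˣ where
  toFun y := ∏ i, (χs i).toUnitHom (y i)
  map_one' := by simp
  map_mul' y z := by
    simp only [Pi.mul_apply, map_mul]
    exact Finset.prod_mul_distrib

lemma delsarteChar_coe (χs : Fin r → MulChar K ℂ) (y : Fin r → Kˣ) :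
    ((delsarteChar χs y : ℂˣ) : ℂ) = ∏ i, (χs i) ((y i : K)) := by
  show ((∏ i, (χs i).toUnitHom (y i) : ℂˣ) : ℂ) = _
  rw [show ((∏ i, (χs i).toUnitHom (y i) : ℂˣ) : ℂ)
      = ∏ i, (((χs i).toUnitHom (y i) : ℂˣ) : ℂ) from
      map_prod (Units.coeHom ℂ) (fun i => (χs i).toUnitHom (y i)) Finset.univ]
  exact Finset.prod_congr rfl fun i _ => (χs i).coe_toUnitHom (y i)

lemma mulChar_prod_apply_coe {ι : Type*} (t : Finset ι) (χ : ι → MulChar K ℂ) (u : Kˣ) :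
    (∏ i ∈ t, χ i) (u : K) = ∏ i ∈ t, χ i (u : K) := by
  classical
  induction t using Finset.cons_induction with
  | empty => simp
  | cons i t hi ih => rw [Finset.prod_cons, Finset.prod_cons, MulChar.mul_apply, ih]

end DelsarteAux

section DelsarteAux2
open Classical Finset

variable {K : Type*} [Field K] [Fintype K] {s r : ℕ}

/-- The predicate cutting out `G̃*`. -/
def delsarteP (m : Fin s → Fin r → ℕ) (χs : Fin r → MulChar K ℂ) : Prop :=
  (∀ x : Fin s → Kˣ, ∏ i, χs i ((monomialMap K s r m x i : Kˣ) : K) = 1)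
  ∧ ∏ i, χs i = 1

lemma delsarteP_iff (m : Fin s → Fin r → ℕ) (χs : Fin r → MulChar K ℂ) :
    delsarteP m χs ↔ ∀ y ∈ (delsartePhi (K := K) m).range, delsarteChar χs y = 1 := by
  constructor
  · rintro ⟨h1, h2⟩ y ⟨⟨t, x⟩, rfl⟩
    refine Units.ext ?_
    rw [delsarteChar_coe]
    have : ∀ i, ((delsartePhi (K := K) m (t, x) i : Kˣ) : K)
        = (t : K) * ((monomialMap K s r m x i : Kˣ) : K) := fun i => rfl
    simp_rw [this, map_mul]
    rw [Finset.prod_mul_distrib]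
    have ht : ∏ i, (χs i) ((t : K)) = 1 := by
      rw [← mulChar_prod_apply_coe Finset.univ χs t, h2, MulChar.one_apply_coe]
    rw [ht, h1 x, one_mul, Units.val_one]
  · intro h
    constructor
    · intro x
      have hy : delsartePhi (K := K) m (1, x) ∈ (delsartePhi (K := K) m).range := ⟨(1, x), rfl⟩
      have := congrArg (Units.val) (h _ hy)
      rw [delsarteChar_coe, Units.val_one] at this
      rw [← this]
      refine Finset.prod_congr rfl fun i _ => ?_
      have h1 : delsartePhi (K := K) m (1, x) i = monomialMap K s r m x i := one_mul _
      rw [h1]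
    · refine MulChar.ext fun t => ?_
      have hy : delsartePhi (K := K) m (t, 1) ∈ (delsartePhi (K := K) m).range := ⟨(t, 1), rfl⟩
      have := congrArg (Units.val) (h _ hy)
      rw [delsarteChar_coe, Units.val_one] at this
      rw [mulChar_prod_apply_coe, MulChar.one_apply_coe, ← this]
      refine Finset.prod_congr rfl fun i _ => ?_
      have h1 : delsartePhi (K := K) m (t, 1) i = t := by
        show t * monomialMap K s r m (1 : Fin s → Kˣ) i = t
        rw [map_one]
        exact mul_one t
      rw [h1]

/-- Lift of `delsarteChar` to the quotient. -/
noncomputable def delsarteLift (m : Fin s → Fin r → ℕ) (χs : Fin r → MulChar K ℂ) :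
    ((Fin r → Kˣ) ⧸ (delsartePhi (K := K) m).range) →* ℂˣ :=
  if h : ∀ y ∈ (delsartePhi (K := K) m).range, delsarteChar χs y = 1
  then QuotientGroup.lift _ (delsarteChar χs) h else 1

lemma delsarteLift_mk {m : Fin s → Fin r → ℕ} {χs : Fin r → MulChar K ℂ}
    (hP : delsarteP m χs) (y : Fin r → Kˣ) :
    delsarteLift m χs (QuotientGroup.mk y) = delsarteChar χs y := by
  rw [delsarteLift, dif_pos ((delsarteP_iff m χs).mp hP)]
  rfl

/-- Inverse construction: from a character of the quotient to a tuple of `MulChar`s. -/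
noncomputable def delsarteBack (m : Fin s → Fin r → ℕ)
    (f : ((Fin r → Kˣ) ⧸ (delsartePhi (K := K) m).range) →* ℂˣ) :
    Fin r → MulChar K ℂ :=
  fun i => MulChar.ofUnitHom (f.comp ((QuotientGroup.mk' _).comp
    (MonoidHom.mulSingle (fun _ : Fin r => Kˣ) i)))

lemma delsarteBack_apply (m : Fin s → Fin r → ℕ)
    (f : ((Fin r → Kˣ) ⧸ (delsartePhi (K := K) m).range) →* ℂˣ) (i : Fin r) (u : Kˣ) :
    delsarteBack m f i (u : K) = ((f (QuotientGroup.mk (Pi.mulSingle i u)) : ℂˣ) : ℂ) := by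
  rw [delsarteBack, MulChar.ofUnitHom_coe]
  rfl

lemma delsarteBack_prod (m : Fin s → Fin r → ℕ)
    (f : ((Fin r → Kˣ) ⧸ (delsartePhi (K := K) m).range) →* ℂˣ) (y : Fin r → Kˣ) :
    ∏ i, delsarteBack m f i ((y i : K)) = ((f (QuotientGroup.mk y) : ℂˣ) : ℂ) := by
  have h1 : ∀ i, delsarteBack m f i ((y i : K))
      = ((f (QuotientGroup.mk (Pi.mulSingle i (y i))) : ℂˣ) : ℂ) := fun i =>
    delsarteBack_apply m f i (y i)
  simp_rw [h1]
  have h2 : (∏ i, (QuotientGroup.mk (Pi.mulSingle i (y i)) :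
      (Fin r → Kˣ) ⧸ (delsartePhi (K := K) m).range)) = QuotientGroup.mk y := by
    have h3 := map_prod (QuotientGroup.mk' (delsartePhi (K := K) m).range)
      (fun i => Pi.mulSingle i (y i)) Finset.univ
    rw [Finset.univ_prod_mulSingle y] at h3
    exact h3.symm
  calc ∏ i, ((f (QuotientGroup.mk (Pi.mulSingle i (y i))) : ℂˣ) : ℂ)
      = ((∏ i, f (QuotientGroup.mk (Pi.mulSingle i (y i))) : ℂˣ) : ℂ) :=
        (map_prod (Units.coeHom ℂ) _ Finset.univ).symm
    _ = ((f (QuotientGroup.mk y) : ℂˣ) : ℂ) := by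
        rw [← h2]
        exact congrArg Units.val (map_prod f (fun i =>
          (QuotientGroup.mk (Pi.mulSingle i (y i)) :
            (Fin r → Kˣ) ⧸ (delsartePhi (K := K) m).range)) Finset.univ).symm

lemma delsarteP_back (m : Fin s → Fin r → ℕ)
    (f : ((Fin r → Kˣ) ⧸ (delsartePhi (K := K) m).range) →* ℂˣ) :
    delsarteP m (delsarteBack m f) := by
  rw [delsarteP_iff]
  rintro y ⟨p, rfl⟩
  refine Units.ext ?_
  rw [delsarteChar_coe, delsarteBack_prod]
  have : (QuotientGroup.mk (delsartePhi (K := K) m p) :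
      (Fin r → Kˣ) ⧸ (delsartePhi (K := K) m).range) = 1 :=
    (QuotientGroup.eq_one_iff _).mpr ⟨p, rfl⟩
  rw [this, map_one, Units.val_one]

lemma delsarteBack_lift {m : Fin s → Fin r → ℕ} {χs : Fin r → MulChar K ℂ}
    (hP : delsarteP m χs) : delsarteBack m (delsarteLift m χs) = χs := by
  funext i
  refine MulChar.ext fun u => ?_
  rw [delsarteBack_apply, delsarteLift_mk hP, delsarteChar_coe]
  rw [Finset.prod_eq_single i (fun j _ hj => by
    rw [Pi.mulSingle_eq_of_ne hj, Units.val_one, map_one]) (fun h => absurd (Finset.mem_univ i) h)]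
  rw [Pi.mulSingle_eq_same]

lemma delsarteLift_back (m : Fin s → Fin r → ℕ)
    (f : ((Fin r → Kˣ) ⧸ (delsartePhi (K := K) m).range) →* ℂˣ) :
    delsarteLift m (delsarteBack m f) = f := by
  refine MonoidHom.ext fun q => ?_
  obtain ⟨y, rfl⟩ := QuotientGroup.mk_surjective q
  rw [delsarteLift_mk (delsarteP_back m f)]
  refine Units.ext ?_
  rw [delsarteChar_coe, delsarteBack_prod]

end DelsarteAux2

section DelsarteAux3
open Classical Finset

variable {K : Type*} [Field K] [Fintype K] {s r : ℕ}

instance {G : Type*} [Group G] [Finite G] (N : Subgroup G) : Finite (G ⧸ N) :=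
  Quotient.finite _

lemma delsarte_sum_filter_eq (m : Fin s → Fin r → ℕ) (y : Fin r → Kˣ) :
    ∑ χs ∈ Finset.univ.filter (delsarteP (K := K) m), ∏ i, (χs i ((y i : K)))
      = ∑ f : ((Fin r → Kˣ) ⧸ (delsartePhi (K := K) m).range) →* ℂˣ,
          ((f (QuotientGroup.mk y) : ℂˣ) : ℂ) := by
  refine Finset.sum_bij' (fun χs _ => delsarteLift m χs) (fun f _ => delsarteBack m f)
    (fun χs _ => Finset.mem_univ _) (fun f _ => ?_) (fun χs hχs => ?_) (fun f _ => ?_)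
    (fun χs hχs => ?_)
  · exact Finset.mem_filter.mpr ⟨Finset.mem_univ _, delsarteP_back m f⟩
  · exact delsarteBack_lift ((Finset.mem_filter.mp hχs).2)
  · exact delsarteLift_back m f
  · rw [delsarteLift_mk ((Finset.mem_filter.mp hχs).2), delsarteChar_coe]

lemma delsarte_factA (m : Fin s → Fin r → ℕ) (y : Fin r → Kˣ) :
    ∑ χs ∈ Finset.univ.filter (delsarteP (K := K) m), ∏ i, (χs i ((y i : K)))
      = if y ∈ (delsartePhi (K := K) m).range
        then ((Nat.card ((Fin r → Kˣ) ⧸ (delsartePhi (K := K) m).range)) : ℂ) else 0 := by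
  rw [delsarte_sum_filter_eq]
  split_ifs with hy
  · have h1 : (QuotientGroup.mk y : (Fin r → Kˣ) ⧸ (delsartePhi (K := K) m).range) = 1 :=
      (QuotientGroup.eq_one_iff _).mpr hy
    rw [h1]
    simp only [map_one, Units.val_one]
    rw [Finset.sum_const, nsmul_eq_mul, mul_one, Finset.card_univ,
      ← Nat.card_eq_fintype_card]
    exact congrArg Nat.cast
      (card_monoidHom_eq ((Fin r → Kˣ) ⧸ (delsartePhi (K := K) m).range))
  · have h1 : (QuotientGroup.mk y : (Fin r → Kˣ) ⧸ (delsartePhi (K := K) m).range) ≠ 1 :=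
      fun h => hy ((QuotientGroup.eq_one_iff _).mp h)
    exact sum_monoidHom_apply_eq_zero h1

end DelsarteAux3

section DelsarteAux4
open Classical Finset

variable {K : Type*} [Field K] [Fintype K]

lemma sum_K_split (f : K → ℂ) : ∑ t : K, f t = f 0 + ∑ v : Kˣ, f (v : K) := by
  classical
  have h1 : ∑ v : Kˣ, f (v : K) = ∑ t ∈ (Finset.univ : Finset K).erase 0, f t := by
    refine Finset.sum_bij (fun v _ => (v : K)) ?_ ?_ ?_ ?_
    · intro v _
      exact Finset.mem_erase.mpr ⟨v.ne_zero, Finset.mem_univ _⟩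
    · intro v _ w _ h
      exact Units.ext h
    · intro t ht
      obtain ⟨ht0, -⟩ := Finset.mem_erase.mp ht
      exact ⟨Units.mk0 t ht0, Finset.mem_univ _, rfl⟩
    · intro v _; rfl
  rw [h1, add_comm]
  exact (Finset.sum_erase_add _ _ (Finset.mem_univ 0)).symm

lemma sum_units_eq {f : K → ℂ} (hf : f 0 = 0) : ∑ v : Kˣ, f (v : K) = ∑ t : K, f t := by
  rw [sum_K_split f, hf, zero_add]

lemma delsarte_gauss_twist (ψ₀ : AddChar K ℂ) (χ : MulChar K ℂ) {b : K} (hb : b ≠ 0) :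
    ∑ v : Kˣ, χ (v : K) * ψ₀ (b * (v : K)) = (χ b)⁻¹ * ∑ t : K, χ t * ψ₀ t := by
  have hbu : IsUnit b := isUnit_iff_ne_zero.mpr hb
  have hχb : χ b ≠ 0 := by
    have := χ.coe_toUnitHom hbu.unit
    rw [IsUnit.unit_spec] at this
    rw [← this]
    exact Units.ne_zero _
  have h1 : ∑ t : K, χ t * ψ₀ t = ∑ t : K, χ (b * t) * ψ₀ (b * t) :=
    (Fintype.sum_bijective (fun t => b * t) (Equiv.mulLeft₀ b hb).bijective _ _ fun t => rfl).symm
  have h2 : ∑ t : K, χ (b * t) * ψ₀ (b * t) = χ b * ∑ t : K, χ t * ψ₀ (b * t) := by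
    rw [Finset.mul_sum]
    exact Finset.sum_congr rfl fun t _ => by rw [map_mul, mul_assoc]
  have h3 : ∑ v : Kˣ, χ (v : K) * ψ₀ (b * (v : K)) = ∑ t : K, χ t * ψ₀ (b * t) :=
    sum_units_eq (f := fun t => χ t * ψ₀ (b * t))
      (by show χ 0 * ψ₀ (b * 0) = 0
          rw [MulChar.map_nonunit χ not_isUnit_zero, zero_mul])
  rw [h3, h1, h2, ← mul_assoc, inv_mul_cancel₀ hχb, one_mul]

end DelsarteAux4

section DelsarteAux5
open Classical Finset

variable {K : Type*} [Field K] [Fintype K] {s r : ℕ}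

lemma delsarte_card_ker_mul (m : Fin s → Fin r → ℕ) :
    Nat.card (delsartePhi (K := K) m).ker * Nat.card (delsartePhi (K := K) m).range
      = (Fintype.card Kˣ) ^ (s + 1) := by
  have h1 := Subgroup.card_eq_card_quotient_mul_card_subgroup (delsartePhi (K := K) m).ker
  have h2 : Nat.card ((Kˣ × (Fin s → Kˣ)) ⧸ (delsartePhi (K := K) m).ker)
      = Nat.card (delsartePhi (K := K) m).range :=
    Nat.card_congr (QuotientGroup.quotientKerEquivRange (delsartePhi (K := K) m)).toEquiv
  have h3 : Nat.card (Kˣ × (Fin s → Kˣ)) = (Fintype.card Kˣ) ^ (s + 1) := by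
    rw [Nat.card_eq_fintype_card, Fintype.card_prod, Fintype.card_pi]
    rw [Finset.prod_const, Finset.card_univ, Fintype.card_fin, pow_succ, mul_comm]
  rw [h2] at h1
  rw [← h3, h1, mul_comm]

lemma delsarte_card_quot_mul (m : Fin s → Fin r → ℕ) :
    Nat.card ((Fin r → Kˣ) ⧸ (delsartePhi (K := K) m).range)
      * Nat.card (delsartePhi (K := K) m).range = (Fintype.card Kˣ) ^ r := by
  have h1 := Subgroup.card_eq_card_quotient_mul_card_subgroup (delsartePhi (K := K) m).range
  have h3 : Nat.card (Fin r → Kˣ) = (Fintype.card Kˣ) ^ r := by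
    rw [Nat.card_eq_fintype_card, Fintype.card_pi]
    rw [Finset.prod_const, Finset.card_univ, Fintype.card_fin]
  rw [← h3, ← h1]

end DelsarteAux5

/-- Delsarte's theorem, eq. (8): the number `N̄` of solutions of
`F = ∑ᵢ aᵢ x₁^{m_{1i}} ⋯ x_s^{m_{si}} = 0` with all coordinates in `K^×` is
`(1/q)[(q-1)^s + (q-1)^{s-r+1} ∑_{χ ∈ G̃*} χ̄(a) 𝒢₀(χ)]`. -/
theorem delsarte_number_of_solutions (K : Type*) [Field K] [Fintype K]
    (s r : ℕ) (m : Fin s → Fin r → ℕ)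
    (hm : ∀ j i, ¬ (Fintype.card K - 1 ∣ m j i))
    (a : Fin r → K) (ha : ∀ i, a i ≠ 0)
    (ψ₀ : AddChar K ℂ) (hψ₀ : ψ₀ ≠ 1) :
    ((Finset.univ.filter (fun x : Fin s → Kˣ =>
        ∑ i, a i * ∏ j, (x j : K) ^ m j i = 0)).card : ℂ)
      = (1 / (Fintype.card K : ℂ)) *
          (((Fintype.card K : ℂ) - 1) ^ s
            + ((Fintype.card K : ℂ) - 1) ^ ((s : ℤ) - (r : ℤ) + 1) *
              ∑ χs ∈ Finset.univ.filter (fun χs : Fin r → MulChar K ℂ =>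
                  (∀ x : Fin s → Kˣ,
                    ∏ i, χs i ((monomialMap K s r m x i : Kˣ) : K) = 1)
                  ∧ ∏ i, χs i = 1),
                (∏ i, (χs i (a i))⁻¹) * ∏ i, ∑ t : K, χs i t * ψ₀ t) := by
  classical
  have hq0 : ((Fintype.card K : ℕ) : ℂ) ≠ 0 := Nat.cast_ne_zero.mpr Fintype.card_ne_zero
  have hcu : ((Fintype.card Kˣ : ℕ) : ℂ) = ((Fintype.card K : ℕ) : ℂ) - 1 := by
    rw [Fintype.card_units, Nat.cast_sub Fintype.card_pos, Nat.cast_one]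
  have hq1ne : ((Fintype.card K : ℕ) : ℂ) - 1 ≠ 0 := by
    rw [← hcu]; exact Nat.cast_ne_zero.mpr Fintype.card_ne_zero
  have hfilter : (Finset.univ.filter (fun χs : Fin r → MulChar K ℂ =>
      (∀ x : Fin s → Kˣ, ∏ i, χs i ((monomialMap K s r m x i : Kˣ) : K) = 1)
      ∧ ∏ i, χs i = 1))
      = Finset.univ.filter (delsarteP (K := K) m) :=
    Finset.filter_congr fun χs _ => Iff.rfl
  set S : ℂ := ∑ χs ∈ Finset.univ.filter (delsarteP (K := K) m),
      (∏ i, (χs i (a i))⁻¹) * ∏ i, ∑ t : K, χs i t * ψ₀ t with hS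
  set Nbar : ℂ := ((Finset.univ.filter (fun x : Fin s → Kˣ =>
      ∑ i, a i * ∏ j, (x j : K) ^ m j i = 0)).card : ℂ) with hNbar
  set R : ℂ := ∑ p : Kˣ × (Fin s → Kˣ),
      ∏ i, ψ₀ (a i * ((delsartePhi (K := K) m p i : K))) with hR
  -- Step 1
  have hstep1 : ((Fintype.card K : ℕ) : ℂ) * Nbar
      = ∑ x : Fin s → Kˣ, ∑ t : K, ψ₀ (t * ∑ i, a i * ∏ j, (x j : K) ^ m j i) := by
    have h1 : ∀ x : Fin s → Kˣ, ∑ t : K, ψ₀ (t * ∑ i, a i * ∏ j, (x j : K) ^ m j i)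
        = if (∑ i, a i * ∏ j, (x j : K) ^ m j i) = 0
          then ((Fintype.card K : ℕ) : ℂ) else 0 := by
      intro x
      have h2 := AddChar.sum_mulShift (∑ i, a i * ∏ j, (x j : K) ^ m j i)
        (AddChar.IsPrimitive.of_ne_one  hψ₀)
      simpa using h2
    calc ((Fintype.card K : ℕ) : ℂ) * Nbar
        = ∑ _x ∈ Finset.univ.filter (fun x : Fin s → Kˣ =>
            ∑ i, a i * ∏ j, (x j : K) ^ m j i = 0), ((Fintype.card K : ℕ) : ℂ) := by
          rw [hNbar, Finset.sum_const, nsmul_eq_mul, mul_comm]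
      _ = ∑ x : Fin s → Kˣ, if (∑ i, a i * ∏ j, (x j : K) ^ m j i) = 0
            then ((Fintype.card K : ℕ) : ℂ) else 0 := Finset.sum_filter _ _
      _ = ∑ x : Fin s → Kˣ, ∑ t : K, ψ₀ (t * ∑ i, a i * ∏ j, (x j : K) ^ m j i) :=
          Finset.sum_congr rfl fun x _ => (h1 x).symm
  -- Step 2
  have hstep2 : ∑ x : Fin s → Kˣ, ∑ t : K, ψ₀ (t * ∑ i, a i * ∏ j, (x j : K) ^ m j i)
      = (((Fintype.card K : ℕ) : ℂ) - 1) ^ s + R := by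
    rw [Finset.sum_comm]
    rw [sum_K_split (fun t => ∑ x : Fin s → Kˣ, ψ₀ (t * ∑ i, a i * ∏ j, (x j : K) ^ m j i))]
    congr 1
    · have h1 : ∀ x : Fin s → Kˣ,
          ψ₀ ((0 : K) * ∑ i, a i * ∏ j, (x j : K) ^ m j i) = 1 := fun x => by
        rw [zero_mul, AddChar.map_zero_eq_one]
      rw [Finset.sum_congr rfl fun x _ => h1 x, Finset.sum_const, nsmul_eq_mul, mul_one,
        Finset.card_univ]
      have h2 : Fintype.card (Fin s → Kˣ) = (Fintype.card Kˣ) ^ s := by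
        rw [Fintype.card_pi, Finset.prod_const, Finset.card_univ, Fintype.card_fin]
      rw [h2, Nat.cast_pow, hcu]
    · rw [hR, Fintype.sum_prod_type]
      refine Finset.sum_congr rfl fun v _ => Finset.sum_congr rfl fun x _ => ?_
      rw [Finset.mul_sum, addChar_map_sum]
      refine Finset.prod_congr rfl fun i _ => congrArg ψ₀ ?_
      have hco : ((delsartePhi (K := K) m (v, x) i : K)) = (v : K) * ∏ j, (x j : K) ^ m j i := by
        show (((v * monomialMap K s r m x i) : Kˣ) : K) = _
        rw [Units.val_mul, monomialMap_coe]
      rw [hco]; ring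
  -- Step 3
  have hstep3 : ((Nat.card ((Fin r → Kˣ) ⧸ (delsartePhi (K := K) m).range) : ℕ) : ℂ) * R
      = ((Nat.card (delsartePhi (K := K) m).ker : ℕ) : ℂ) * S := by
    have hfib : (∑ p : Kˣ × (Fin s → Kˣ),
          ∏ i, ψ₀ (a i * ((delsartePhi (K := K) m p i : K))))
        = ((Nat.card (delsartePhi (K := K) m).ker : ℕ) : ℂ)
          * ∑ u ∈ Finset.univ.filter (fun u => u ∈ (delsartePhi (K := K) m).range),
              ∏ i, ψ₀ (a i * ((u i : K))) :=
      sum_comp_monoidHom (delsartePhi (K := K) m) (fun u => ∏ i, ψ₀ (a i * ((u i : K))))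
    rw [hR, hfib, ← mul_assoc,
      mul_comm ((Nat.card ((Fin r → Kˣ) ⧸ (delsartePhi (K := K) m).range) : ℕ) : ℂ)
        ((Nat.card (delsartePhi (K := K) m).ker : ℕ) : ℂ), mul_assoc]
    congr 1
    calc ((Nat.card ((Fin r → Kˣ) ⧸ (delsartePhi (K := K) m).range) : ℕ) : ℂ)
          * ∑ u ∈ Finset.univ.filter (fun u => u ∈ (delsartePhi (K := K) m).range),
              ∏ i, ψ₀ (a i * ((u i : K)))
        = ∑ u : Fin r → Kˣ,
            (if u ∈ (delsartePhi (K := K) m).range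
              then ((Nat.card ((Fin r → Kˣ) ⧸ (delsartePhi (K := K) m).range) : ℕ) : ℂ)
              else 0) * ∏ i, ψ₀ (a i * ((u i : K))) := by
          rw [Finset.mul_sum]
          symm
          simp_rw [ite_mul, zero_mul]
          rw [← Finset.sum_filter]
      _ = ∑ u : Fin r → Kˣ,
            (∑ χs ∈ Finset.univ.filter (delsarteP (K := K) m), ∏ i, (χs i ((u i : K))))
              * ∏ i, ψ₀ (a i * ((u i : K))) :=
          Finset.sum_congr rfl fun u _ => by rw [delsarte_factA m u]
      _ = ∑ χs ∈ Finset.univ.filter (delsarteP (K := K) m),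
            ∑ u : Fin r → Kˣ, ∏ i, (χs i ((u i : K)) * ψ₀ (a i * ((u i : K)))) := by
          simp_rw [Finset.sum_mul]
          rw [Finset.sum_comm]
          refine Finset.sum_congr rfl fun χs _ => Finset.sum_congr rfl fun u _ => ?_
          rw [← Finset.prod_mul_distrib]
      _ = ∑ χs ∈ Finset.univ.filter (delsarteP (K := K) m),
            ∏ i, ∑ v : Kˣ, (χs i ((v : K)) * ψ₀ (a i * ((v : K)))) := by
          refine Finset.sum_congr rfl fun χs _ => ?_
          symm
          rw [Finset.prod_univ_sum, Fintype.piFinset_univ]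
      _ = S := by
          rw [hS]
          refine Finset.sum_congr rfl fun χs _ => ?_
          rw [Finset.prod_congr rfl fun i _ =>
            delsarte_gauss_twist ψ₀ (χs i) (ha i), Finset.prod_mul_distrib]
  -- Step 4: cardinalities
  have hcard1 : ((Nat.card (delsartePhi (K := K) m).ker : ℕ) : ℂ)
      * ((Nat.card (delsartePhi (K := K) m).range : ℕ) : ℂ)
      = (((Fintype.card K : ℕ) : ℂ) - 1) ^ (s + 1) := by
    rw [← Nat.cast_mul, delsarte_card_ker_mul m, Nat.cast_pow, hcu]
  have hcard2 : ((Nat.card ((Fin r → Kˣ) ⧸ (delsartePhi (K := K) m).range) : ℕ) : ℂ)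
      * ((Nat.card (delsartePhi (K := K) m).range : ℕ) : ℂ)
      = (((Fintype.card K : ℕ) : ℂ) - 1) ^ r := by
    rw [← Nat.cast_mul, delsarte_card_quot_mul m, Nat.cast_pow, hcu]
  -- Step 5
  have h5 : (((Fintype.card K : ℕ) : ℂ) - 1) ^ r * R
      = (((Fintype.card K : ℕ) : ℂ) - 1) ^ (s + 1) * S := by
    rw [← hcard2, ← hcard1]
    calc ((Nat.card ((Fin r → Kˣ) ⧸ (delsartePhi (K := K) m).range) : ℕ) : ℂ)
          * ((Nat.card (delsartePhi (K := K) m).range : ℕ) : ℂ) * R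
        = ((Nat.card (delsartePhi (K := K) m).range : ℕ) : ℂ)
          * (((Nat.card ((Fin r → Kˣ) ⧸ (delsartePhi (K := K) m).range) : ℕ) : ℂ) * R) := by
          ring
      _ = ((Nat.card (delsartePhi (K := K) m).range : ℕ) : ℂ)
          * (((Nat.card (delsartePhi (K := K) m).ker : ℕ) : ℂ) * S) := by rw [hstep3]
      _ = ((Nat.card (delsartePhi (K := K) m).ker : ℕ) : ℂ)
          * ((Nat.card (delsartePhi (K := K) m).range : ℕ) : ℂ) * S := by ring
  have hRS : R = (((Fintype.card K : ℕ) : ℂ) - 1) ^ ((s : ℤ) - (r : ℤ) + 1) * S := by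
    have h6 := congrArg (fun z => ((((Fintype.card K : ℕ) : ℂ) - 1) ^ r)⁻¹ * z) h5
    rw [inv_mul_cancel_left₀ (pow_ne_zero r hq1ne)] at h6
    rw [h6, ← mul_assoc]
    congr 1
    rw [← zpow_natCast (((Fintype.card K : ℕ) : ℂ) - 1) r,
      ← zpow_natCast (((Fintype.card K : ℕ) : ℂ) - 1) (s + 1),
      ← zpow_neg, ← zpow_add₀ hq1ne]
    congr 1
    push_cast
    ring
  have hmain : ((Fintype.card K : ℕ) : ℂ) * Nbar
      = (((Fintype.card K : ℕ) : ℂ) - 1) ^ s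
        + (((Fintype.card K : ℕ) : ℂ) - 1) ^ ((s : ℤ) - (r : ℤ) + 1) * S := by
    rw [hstep1, hstep2, hRS]
  rw [hfilter, ← hS, ← hmain, one_div, inv_mul_cancel_left₀ hq0]
end
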